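/- Let (P, ≤, ') be a poset with antitone involution and n > 1. Adjoin a chain 0 = c₁ < ... < cₙ below P and cₙ₊₁ < ... < c₂ₙ = 1 above P (so cₙ < x < cₙ₊₁ for all x ∈ P), set cᵢ' := c₂ₙ₊₁₋ᵢ, and define ⊙ and → by: 0 ⊙ x = 0, 1 ⊙ x = x, 0 → x = x → 1 = 1, x → 0 = x', 1 → x = x; for x, y ∈ P: x ⊙ y = 0 if x ≤ y' else c₂, x → y = 1 if x ≤ y else c₂ₙ₋₁; for 2 ≤ i, j ≤ 2n−1: cᵢ ⊙ cⱼ = 0 if i + j ≤ 2n + 1 else c₂, cᵢ → cⱼ = 1 if i ≤ j else c₂ₙ₋₁; and mixed cases cᵢ ⊙ x = cᵢ ⊙ cₙ₊₁, cᵢ → x = cᵢ → cₙ, x → cᵢ = cₙ₊₁ → cᵢ. Then (Q, ≤, ⊙, →, 1) is a residuated poset with antitone involution satisfying x' = x → 0 for all x ∈ Q. -/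
import Mathlib


attribute [local instance] Classical.propDecidable

/-- The extension Q = P ∪ {c₁, ..., c₂ₙ} of a poset P: `base x` is an element
of P and `ext i` (i : Fin (2 * n)) is cᵢ₊₁; so `ext 0` = c₁ = 0, `ext 1` = c₂,
`ext (2n - 2)` = c₂ₙ₋₁ and `ext (2n - 1)` = c₂ₙ = 1.  The elements
c₁, ..., cₙ lie below P and cₙ₊₁, ..., c₂ₙ lie above P. -/
inductive QP (P : Type*) (n : ℕ) where
  | base : P → QP P n
  | ext : Fin (2 * n) → QP P n

namespace QP

variable {P : Type*} {n : ℕ} [PartialOrder P]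

/-- The order on Q: c₁ < ... < cₙ < x < cₙ₊₁ < ... < c₂ₙ for all x ∈ P. -/
def le : QP P n → QP P n → Prop
  | base x, base y => x ≤ y
  | base _, ext i => n ≤ i.val
  | ext i, base _ => i.val < n
  | ext i, ext j => i ≤ j

instance : PartialOrder (QP P n) where
  le := le
  le_refl x := by cases x <;> simp [le]
  le_trans x y z := by
    cases x <;> cases y <;> cases z <;>
      simp only [le, Fin.le_def] <;> intros <;>
      first
        | omega
        | (apply le_trans <;> assumption)
        | trivial
  le_antisymm x y := by
    cases x <;> cases y <;>
      simp only [le, Fin.le_def] <;> intros <;>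
      first
        | (congr 1; apply le_antisymm <;> assumption)
        | (congr 1; omega)
        | omega

/-- The extension of the antitone involution ' of P to Q, with cᵢ' = c₂ₙ₊₁₋ᵢ. -/
def inv (hn : 1 < n) (f : P → P) : QP P n → QP P n
  | base x => base (f x)
  | ext i => ext ⟨2 * n - 1 - i.val, by omega⟩

/-- The monoid operation ⊙ on Q: 0 ⊙ x = 0, 1 ⊙ x = x, and for all other
pairs, x ⊙ y = 0 if x ≤ y' (equivalently: for x, y ∈ P, x ≤ y'; for
cᵢ ⊙ cⱼ, i + j ≤ 2n + 1; for the mixed cases, cᵢ ⊙ x = cᵢ ⊙ cₙ₊₁ and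
x ⊙ cᵢ = cₙ₊₁ ⊙ cᵢ), and x ⊙ y = c₂ otherwise. -/
noncomputable def mul (hn : 1 < n) (f : P → P) (x y : QP P n) : QP P n :=
  if x = ext ⟨0, by omega⟩ ∨ y = ext ⟨0, by omega⟩ then ext ⟨0, by omega⟩
  else if x = ext ⟨2 * n - 1, by omega⟩ then y
  else if y = ext ⟨2 * n - 1, by omega⟩ then x
  else if le x (inv hn f y) then ext ⟨0, by omega⟩ else ext ⟨1, by omega⟩

/-- The residuum → on Q: 0 → x = x → 1 = 1, x → 0 = x', 1 → x = x, and for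
all other pairs, x → y = 1 if x ≤ y (covering x, y ∈ P; cᵢ → cⱼ with i ≤ j;
and the mixed cases cᵢ → x = cᵢ → cₙ, x → cᵢ = cₙ₊₁ → cᵢ), and
x → y = c₂ₙ₋₁ otherwise. -/
noncomputable def imp (hn : 1 < n) (f : P → P) (x y : QP P n) : QP P n :=
  if x = ext ⟨0, by omega⟩ ∨ y = ext ⟨2 * n - 1, by omega⟩ then
    ext ⟨2 * n - 1, by omega⟩
  else if y = ext ⟨0, by omega⟩ then inv hn f x
  else if x = ext ⟨2 * n - 1, by omega⟩ then y
  else if le x y then ext ⟨2 * n - 1, by omega⟩ else ext ⟨2 * n - 2, by omega⟩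

end QP

namespace QP

variable {P : Type*} {n : ℕ} [PartialOrder P]

lemma le_top' (hn : 0 < n) (x : QP P n) : x ≤ ext ⟨2 * n - 1, by omega⟩ := by
  cases x with
  | base a => show n ≤ 2 * n - 1; omega
  | ext i => show i.val ≤ 2 * n - 1; have := i.isLt; omega

lemma bot_le' (hn : 0 < n) (x : QP P n) : (ext ⟨0, by omega⟩ : QP P n) ≤ x := by
  cases x with
  | base a => show 0 < n; omega
  | ext i => show 0 ≤ i.val; omega

lemma le_bot_iff (hn : 0 < n) (x : QP P n) :
    x ≤ (ext ⟨0, by omega⟩ : QP P n) ↔ x = ext ⟨0, by omega⟩ := by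
  cases x with
  | base a =>
    constructor <;> intro h
    · exact absurd (show n ≤ 0 from h) (by omega)
    · exact absurd h (by simp)
  | ext i =>
    constructor <;> intro h
    · have : i.val ≤ 0 := h
      congr 1; apply Fin.ext; show i.val = 0; omega
    · have : i = ⟨0, by omega⟩ := by injection h
      exact this ▸ le_refl _

lemma top_le_iff (hn : 0 < n) (x : QP P n) :
    (ext ⟨2 * n - 1, by omega⟩ : QP P n) ≤ x ↔ x = ext ⟨2 * n - 1, by omega⟩ := by
  cases x with
  | base a =>
    constructor <;> intro h
    · exact absurd (show 2 * n - 1 < n from h) (by omega)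
    · exact absurd h (by simp)
  | ext i =>
    constructor <;> intro h
    · have h' : 2 * n - 1 ≤ i.val := h
      have := i.isLt
      congr 1; apply Fin.ext; show i.val = 2 * n - 1; omega
    · have : i = ⟨2 * n - 1, by omega⟩ := by injection h
      exact this ▸ le_refl _

lemma c2_le (hn : 1 < n) (x : QP P n) (hx : x ≠ ext ⟨0, by omega⟩) :
    (ext ⟨1, by omega⟩ : QP P n) ≤ x := by
  cases x with
  | base a => show 1 < n; omega
  | ext i =>
    show 1 ≤ i.val
    rcases Nat.eq_zero_or_pos i.val with h | h
    · exact absurd (by congr 1; apply Fin.ext; show i.val = 0; omega) hx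
    · omega

lemma le_c2n2 (hn : 1 < n) (x : QP P n) (hx : x ≠ ext ⟨2 * n - 1, by omega⟩) :
    x ≤ (ext ⟨2 * n - 2, by omega⟩ : QP P n) := by
  cases x with
  | base a => show n ≤ 2 * n - 2; omega
  | ext i =>
    show i.val ≤ 2 * n - 2
    have := i.isLt
    rcases Nat.lt_or_ge i.val (2 * n - 1) with h | h
    · omega
    · exact absurd (by congr 1; apply Fin.ext; show i.val = 2 * n - 1; omega) hx

lemma le_inv_symm (hn : 1 < n) (f : P → P)
    (hanti : ∀ x y : P, x ≤ y → f y ≤ f x) (hinv : ∀ x : P, f (f x) = x)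
    (x y : QP P n) : le x (inv hn f y) ↔ le y (inv hn f x) := by
  cases x with
  | base a =>
    cases y with
    | base b =>
      show a ≤ f b ↔ b ≤ f a
      constructor <;> intro h
      · have := hanti _ _ h; rwa [hinv] at this
      · have := hanti _ _ h; rwa [hinv] at this
    | ext j =>
      show n ≤ 2 * n - 1 - j.val ↔ j.val < n
      have := j.isLt; omega
  | ext i =>
    cases y with
    | base b =>
      show i.val < n ↔ n ≤ 2 * n - 1 - i.val
      have := i.isLt; omega
    | ext j =>
      show i.val ≤ 2 * n - 1 - j.val ↔ j.val ≤ 2 * n - 1 - i.val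
      have := i.isLt; have := j.isLt; omega

lemma mul_comm' (hn : 1 < n) (f : P → P)
    (hanti : ∀ x y : P, x ≤ y → f y ≤ f x) (hinv : ∀ x : P, f (f x) = x)
    (x y : QP P n) : mul hn f x y = mul hn f y x := by
  rw [mul, mul]
  by_cases h0 : x = ext ⟨0, by omega⟩ ∨ y = ext ⟨0, by omega⟩
  · rw [if_pos h0, if_pos (Or.symm h0)]
  · rw [if_neg h0, if_neg (fun h => h0 (Or.symm h))]
    push_neg at h0
    by_cases hx1 : x = ext ⟨2 * n - 1, by omega⟩
    · subst hx1
      by_cases hy1 : y = ext ⟨2 * n - 1, by omega⟩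
      · subst hy1; rfl
      · rw [if_pos rfl, if_neg hy1, if_pos rfl]
    · by_cases hy1 : y = ext ⟨2 * n - 1, by omega⟩
      · subst hy1; rw [if_neg hx1, if_pos rfl, if_pos rfl]
      · rw [if_neg hx1, if_neg hy1, if_neg hy1, if_neg hx1]
        simp only [le_inv_symm hn f hanti hinv x y]

lemma bot_ne_top (hn : 1 < n) :
    (ext ⟨0, by omega⟩ : QP P n) ≠ ext ⟨2 * n - 1, by omega⟩ := by
  intro h
  have : (0 : ℕ) = 2 * n - 1 := by injection h with h'; exact congrArg Fin.val h'
  omega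

lemma c2_ne_bot (hn : 1 < n) :
    (ext ⟨1, by omega⟩ : QP P n) ≠ ext ⟨0, by omega⟩ := by
  intro h
  have : (1 : ℕ) = 0 := by injection h with h'; exact congrArg Fin.val h'
  omega

lemma c2_ne_top (hn : 1 < n) :
    (ext ⟨1, by omega⟩ : QP P n) ≠ ext ⟨2 * n - 1, by omega⟩ := by
  intro h
  have : (1 : ℕ) = 2 * n - 1 := by injection h with h'; exact congrArg Fin.val h'
  omega

lemma c2n2_ne_top (hn : 1 < n) :
    (ext ⟨2 * n - 2, by omega⟩ : QP P n) ≠ ext ⟨2 * n - 1, by omega⟩ := by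
  intro h
  have : 2 * n - 2 = 2 * n - 1 := by injection h with h'; exact congrArg Fin.val h'
  omega

lemma mul_bot (hn : 1 < n) (f : P → P) (x : QP P n) :
    mul hn f x (ext ⟨0, by omega⟩) = ext ⟨0, by omega⟩ := by
  rw [mul]; rw [if_pos (Or.inr rfl)]

lemma bot_mul (hn : 1 < n) (f : P → P) (x : QP P n) :
    mul hn f (ext ⟨0, by omega⟩) x = ext ⟨0, by omega⟩ := by
  rw [mul]; rw [if_pos (Or.inl rfl)]

lemma mul_top (hn : 1 < n) (f : P → P) (x : QP P n) :
    mul hn f x (ext ⟨2 * n - 1, by omega⟩) = x := by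
  rw [mul]
  by_cases h0 : x = ext ⟨0, by omega⟩
  · rw [if_pos (Or.inl h0), h0]
  · rw [if_neg (by rintro (h | h); exact h0 h; exact bot_ne_top hn h.symm)]
    by_cases hx1 : x = ext ⟨2 * n - 1, by omega⟩
    · rw [if_pos hx1, hx1]
    · rw [if_neg hx1, if_pos rfl]

lemma top_mul (hn : 1 < n) (f : P → P) (x : QP P n) :
    mul hn f (ext ⟨2 * n - 1, by omega⟩) x = x := by
  rw [mul]
  by_cases h0 : x = ext ⟨0, by omega⟩
  · rw [if_pos (Or.inr h0), h0]
  · rw [if_neg (by rintro (h | h); exact bot_ne_top hn h.symm; exact h0 h)]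
    rw [if_pos rfl]

lemma mul_mem (hn : 1 < n) (f : P → P) (x y : QP P n)
    (hx : x ≠ ext ⟨2 * n - 1, by omega⟩) (hy : y ≠ ext ⟨2 * n - 1, by omega⟩) :
    mul hn f x y = ext ⟨0, by omega⟩ ∨ mul hn f x y = ext ⟨1, by omega⟩ := by
  rw [mul]
  split_ifs <;> first
    | exact Or.inl rfl
    | exact Or.inr rfl
    | (exact absurd (by assumption) hx)
    | (exact absurd (by assumption) hy)

lemma mul_c2 (hn : 1 < n) (f : P → P) (z : QP P n)
    (hz : z ≠ ext ⟨2 * n - 1, by omega⟩) :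
    mul hn f (ext ⟨1, by omega⟩) z = ext ⟨0, by omega⟩ := by
  rw [mul]
  by_cases hz0 : z = ext ⟨0, by omega⟩
  · rw [if_pos (Or.inr hz0)]
  · rw [if_neg (by rintro (h | h); exact c2_ne_bot hn h; exact hz0 h),
      if_neg (c2_ne_top hn), if_neg hz, if_pos]
    cases z with
    | base a => show 1 < n; omega
    | ext j =>
      show 1 ≤ 2 * n - 1 - j.val
      have := j.isLt
      have : j.val ≠ 2 * n - 1 := fun h =>
        hz (by congr 1; exact Fin.ext h)
      omega

lemma mul_assoc' (hn : 1 < n) (f : P → P)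
    (hanti : ∀ x y : P, x ≤ y → f y ≤ f x) (hinv : ∀ x : P, f (f x) = x)
    (x y z : QP P n) :
    mul hn f (mul hn f x y) z = mul hn f x (mul hn f y z) := by
  by_cases hx0 : x = ext ⟨0, by omega⟩
  · subst hx0; rw [bot_mul, bot_mul, bot_mul]
  by_cases hy0 : y = ext ⟨0, by omega⟩
  · subst hy0; rw [mul_bot, bot_mul, mul_bot]
  by_cases hz0 : z = ext ⟨0, by omega⟩
  · subst hz0; rw [mul_bot, mul_bot, mul_bot]
  by_cases hx1 : x = ext ⟨2 * n - 1, by omega⟩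
  · subst hx1; rw [top_mul, top_mul]
  by_cases hy1 : y = ext ⟨2 * n - 1, by omega⟩
  · subst hy1; rw [mul_top, top_mul]
  by_cases hz1 : z = ext ⟨2 * n - 1, by omega⟩
  · subst hz1; rw [mul_top, mul_top]
  rcases mul_mem hn f x y hx1 hy1 with h1 | h1 <;>
    rcases mul_mem hn f y z hy1 hz1 with h2 | h2 <;> rw [h1, h2]
  · rw [bot_mul, mul_bot]
  · rw [bot_mul, mul_comm' hn f hanti hinv x _, mul_c2 hn f x hx1]
  · rw [mul_c2 hn f z hz1, mul_bot]
  · rw [mul_c2 hn f z hz1, mul_comm' hn f hanti hinv x _, mul_c2 hn f x hx1]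

lemma inv_top (hn : 1 < n) (f : P → P) :
    inv hn f (ext ⟨2 * n - 1, by omega⟩ : QP P n) = ext ⟨0, by omega⟩ := by
  simp only [inv]; congr 1; apply Fin.ext; show 2 * n - 1 - (2 * n - 1) = 0; omega

lemma inv_bot (hn : 1 < n) (f : P → P) :
    inv hn f (ext ⟨0, by omega⟩ : QP P n) = ext ⟨2 * n - 1, by omega⟩ := by
  rfl

lemma imp_bot (hn : 1 < n) (f : P → P) (x : QP P n) :
    imp hn f x (ext ⟨0, by omega⟩) = inv hn f x := by
  rw [imp]
  by_cases hx0 : x = ext ⟨0, by omega⟩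
  · rw [if_pos (Or.inl hx0), hx0, inv_bot]
  · rw [if_neg (by rintro (h | h); exact hx0 h; exact bot_ne_top hn h),
      if_pos rfl]

lemma inv_inv' (hn : 1 < n) (f : P → P) (hinv : ∀ x : P, f (f x) = x)
    (x : QP P n) : inv hn f (inv hn f x) = x := by
  cases x with
  | base a => simp only [inv]; rw [hinv]
  | ext i =>
    simp only [inv]; congr 1
    exact Fin.ext (by have := i.isLt; simp; omega)

lemma inv_anti (hn : 1 < n) (f : P → P)
    (hanti : ∀ x y : P, x ≤ y → f y ≤ f x)
    (x y : QP P n) (h : x ≤ y) : inv hn f y ≤ inv hn f x := by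
  cases x with
  | base a =>
    cases y with
    | base b => exact hanti a b h
    | ext j =>
      have h' : n ≤ j.val := h
      show 2 * n - 1 - j.val < n
      have := j.isLt; omega
  | ext i =>
    cases y with
    | base b =>
      have h' : i.val < n := h
      show n ≤ 2 * n - 1 - i.val
      have := i.isLt; omega
    | ext j =>
      have h' : i.val ≤ j.val := h
      show 2 * n - 1 - j.val ≤ 2 * n - 1 - i.val
      omega

lemma adjoint (hn : 1 < n) (f : P → P)
    (hanti : ∀ x y : P, x ≤ y → f y ≤ f x) (hinv : ∀ x : P, f (f x) = x)
    (x y z : QP P n) : mul hn f x y ≤ z ↔ x ≤ imp hn f y z := by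
  have hn0 : 0 < n := by omega
  by_cases hy0 : y = ext ⟨0, by omega⟩
  · subst hy0
    rw [mul_bot]
    rw [imp]; rw [if_pos (Or.inl rfl)]
    exact iff_of_true (bot_le' hn0 z) (le_top' hn0 x)
  by_cases hz1 : z = ext ⟨2 * n - 1, by omega⟩
  · subst hz1
    rw [imp]; rw [if_pos (Or.inr rfl)]
    exact iff_of_true (le_top' hn0 _) (le_top' hn0 x)
  have himp1 : ¬(y = ext ⟨0, by omega⟩ ∨ z = ext ⟨2 * n - 1, by omega⟩) := by
    rintro (h | h); exact hy0 h; exact hz1 h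
  by_cases hx0 : x = ext ⟨0, by omega⟩
  · subst hx0
    rw [bot_mul]
    exact iff_of_true (bot_le' hn0 z) (bot_le' hn0 _)
  by_cases hz0 : z = ext ⟨0, by omega⟩
  · subst hz0
    rw [imp]; rw [if_neg himp1, if_pos rfl]
    rw [le_bot_iff hn0]
    by_cases hx1 : x = ext ⟨2 * n - 1, by omega⟩
    · subst hx1
      rw [top_mul]
      constructor <;> intro h
      · exact absurd h hy0
      · exfalso
        have h2 := (top_le_iff hn0 _).1 h
        have h3 : y = ext ⟨0, by omega⟩ := by
          have := congrArg (inv hn f) h2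
          rwa [inv_inv' hn f hinv, inv_top] at this
        exact hy0 h3
    · by_cases hy1 : y = ext ⟨2 * n - 1, by omega⟩
      · subst hy1
        rw [mul_top, inv_top]
        constructor <;> intro h
        · exact absurd h hx0
        · exact absurd ((le_bot_iff hn0 x).1 h) hx0
      · rw [mul]
        rw [if_neg (by rintro (h | h); exact hx0 h; exact hy0 h),
          if_neg hx1, if_neg hy1]
        split_ifs with h
        · exact iff_of_true rfl h
        · exact iff_of_false (fun hc => c2_ne_bot hn hc) h
  by_cases hx1 : x = ext ⟨2 * n - 1, by omega⟩
  · subst hx1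
    rw [top_mul]
    rw [imp]; rw [if_neg himp1, if_neg hz0]
    by_cases hy1 : y = ext ⟨2 * n - 1, by omega⟩
    · subst hy1; rw [if_pos rfl]
    · rw [if_neg hy1]
      split_ifs with h
      · exact iff_of_true h (le_refl _)
      · refine iff_of_false h (fun hc => ?_)
        exact c2n2_ne_top hn ((top_le_iff hn0 _).1 hc)
  by_cases hy1 : y = ext ⟨2 * n - 1, by omega⟩
  · subst hy1
    rw [mul_top]
    rw [imp]; rw [if_neg himp1, if_neg hz0, if_pos rfl]
  · refine iff_of_true ?_ ?_
    · rcases mul_mem hn f x y hx1 hy1 with h | h <;> rw [h]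
      · exact bot_le' hn0 z
      · exact c2_le hn z hz0
    · rw [imp]; rw [if_neg himp1, if_neg hz0, if_neg hy1]
      split_ifs with h
      · exact le_top' hn0 x
      · exact le_c2n2 hn x hx1

end QP

/-- The extension Q of a poset with antitone involution by a 2n-element chain
(n of the new elements below P, n above) is a residuated poset with antitone
involution satisfying x' = x → 0 for all x ∈ Q. -/
theorem stmt18 {P : Type*} [PartialOrder P] {n : ℕ} (hn : 1 < n) (f : P → P)
    (hanti : ∀ x y : P, x ≤ y → f y ≤ f x) (hinv : ∀ x : P, f (f x) = x) :
    (∀ x : QP P n, x ≤ QP.ext ⟨2 * n - 1, by omega⟩) ∧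
    (∀ x y : QP P n, QP.mul hn f x y = QP.mul hn f y x) ∧
    (∀ x y z : QP P n,
      QP.mul hn f (QP.mul hn f x y) z = QP.mul hn f x (QP.mul hn f y z)) ∧
    (∀ x : QP P n, QP.mul hn f x (QP.ext ⟨2 * n - 1, by omega⟩) = x) ∧
    (∀ x y z : QP P n, QP.mul hn f x y ≤ z ↔ x ≤ QP.imp hn f y z) ∧
    (∀ x : QP P n, QP.imp hn f x (QP.ext ⟨0, by omega⟩) = QP.inv hn f x) ∧
    (∀ x : QP P n, QP.inv hn f (QP.inv hn f x) = x) ∧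
    (∀ x y : QP P n, x ≤ y → QP.inv hn f y ≤ QP.inv hn f x) := by
  have hn0 : 0 < n := by omega
  refine ⟨QP.le_top' hn0, QP.mul_comm' hn f hanti hinv,
    QP.mul_assoc' hn f hanti hinv, QP.mul_top hn f,
    QP.adjoint hn f hanti hinv, QP.imp_bot hn f,
    QP.inv_inv' hn f hinv, QP.inv_anti hn f hanti⟩
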